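/- Let $\gamma \in [0,1]$. Every $H$-eigenvalue $\lambda$ of $\mathcal{A} \in \mathbb{C}^{[m\times n]}$ lies in $\bigcup_{i} \mathcal{O}_i(\mathcal{A})$, where $\mathcal{O}_i(\mathcal{A}) = \{z : |z - a_{i\cdots i}| - s_{ii}(\mathcal{A}) \le (P_i(A))^{\gamma} (Q_i(A))^{1-\gamma}\}$ with $P_i(A) = \sum_{j\ne i} s_{ij}(\mathcal{A})$, $Q_i(A) = \sum_{j\ne i} s_{ji}(\mathcal{A})$ (modified Ostrowski set for tensor $H$-eigenvalues). -/

import Mathlib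

open Finset

noncomputable def tDiag {n k : ℕ} (A : Fin n → (Fin k → Fin n) → ℂ) (i : Fin n) : ℝ :=
  ‖A i (fun _ => i)‖

noncomputable def tRow {n k : ℕ} (A : Fin n → (Fin k → Fin n) → ℂ) (i : Fin n) : ℝ :=
  ∑ α ∈ univ.filter (fun α : Fin k → Fin n => α ≠ fun _ => i), ‖A i α‖

noncomputable def tS {n k : ℕ} (A : Fin n → (Fin k → Fin n) → ℂ) (i j : Fin n) : ℝ :=
  (1 / (k : ℝ)) * ∑ t : Fin k,
    ∑ α ∈ univ.filter (fun α : Fin k → Fin n => α t = j ∧ α ≠ fun _ => i),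
      ‖A i α‖

noncomputable def tP {n k : ℕ} (A : Fin n → (Fin k → Fin n) → ℂ) (i : Fin n) : ℝ :=
  ∑ j ∈ univ.erase i, tS A i j

noncomputable def tQ {n k : ℕ} (A : Fin n → (Fin k → Fin n) → ℂ) (i : Fin n) : ℝ :=
  ∑ j ∈ univ.erase i, tS A j i

def IsHTensor {n k : ℕ} (A : Fin n → (Fin k → Fin n) → ℂ) : Prop :=
  ∃ y : Fin n → ℝ, (∀ i, 0 < y i) ∧ ∀ i,
    (∑ α ∈ univ.filter (fun α : Fin k → Fin n => α ≠ fun _ => i),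
        ‖A i α‖ * ∏ t, y (α t)) < tDiag A i * y i ^ k

def IsHEig {n k : ℕ} (A : Fin n → (Fin k → Fin n) → ℂ) (lam : ℝ) : Prop :=
  ∃ x : Fin n → ℝ, x ≠ 0 ∧ ∀ i,
    (∑ α : Fin k → Fin n, A i α * ∏ t, (x (α t) : ℂ)) = (lam : ℂ) * (x i : ℂ) ^ k

/-!
With `u j = |x j| ^ k` for an H-eigenvector `x`, isolating the diagonal term of the eigenvalue
equation and bounding each monomial `∏ t, |x (α t)|` by `(1/k) ∑ t, u (α t)` (AM-GM) gives
`(|λ - a_{i…i}| - s_ii) u_i ≤ ∑_{j ≠ i} s_ij u_j` for every `i`, with `u ≥ 0`, `u ≠ 0`.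
This is the situation of Ostrowski's theorem for the matrix `(s_ij)`: Hölder's inequality bounds the
right-hand side by `P_i ^ γ (∑_{j ≠ i} s_ij v_j) ^ (1 - γ)` with `v = u ^ (1 / (1 - γ))`, and since
`∑_i Q_i v_i = ∑_i ∑_{j ≠ i} s_ij v_j`, some `i` with `v_i > 0` has `∑_{j ≠ i} s_ij v_j ≤ Q_i v_i`.
For `γ = 1` one argues at a maximal entry of `u` instead, as for Geršgorin's theorem.
-/

section Ostrowski

variable {ι : Type*} [Fintype ι] [DecidableEq ι]

theorem sum_sum_erase_comm {M : Type*} [AddCommGroup M] (f : ι → ι → M) :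
    ∑ i, ∑ j ∈ univ.erase i, f i j = ∑ i, ∑ j ∈ univ.erase i, f j i := by
  simp only [sum_erase_eq_sub (mem_univ _), sum_sub_distrib]
  rw [sum_comm]

variable {S : ι → ι → ℝ} {d u : ι → ℝ}

theorem exists_le_sum_erase_of_mul_le (hS : ∀ i j, 0 ≤ S i j) (hu : ∀ i, 0 ≤ u i) (hu₀ : u ≠ 0)
    (h : ∀ i, d i * u i ≤ ∑ j ∈ univ.erase i, S i j * u j) :
    ∃ i, d i ≤ ∑ j ∈ univ.erase i, S i j := by
  obtain ⟨i₀, hi₀⟩ := Function.ne_iff.1 hu₀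
  have : Nonempty ι := ⟨i₀⟩
  obtain ⟨i, hmax⟩ := Finite.exists_max u
  have hui : 0 < u i := ((hu i₀).lt_of_ne' hi₀).trans_le (hmax i₀)
  refine ⟨i, le_of_mul_le_mul_right ?_ hui⟩
  calc d i * u i ≤ ∑ j ∈ univ.erase i, S i j * u j := h i
    _ ≤ ∑ j ∈ univ.erase i, S i j * u i := by gcongr with j; exacts [hS i j, hmax j]
    _ = (∑ j ∈ univ.erase i, S i j) * u i := (sum_mul ..).symm

theorem exists_le_rpow_mul_rpow_of_mul_le_of_lt_one (hS : ∀ i j, 0 ≤ S i j) (hu : ∀ i, 0 ≤ u i)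
    (hu₀ : u ≠ 0) (h : ∀ i, d i * u i ≤ ∑ j ∈ univ.erase i, S i j * u j) {γ : ℝ} (hγ₀ : 0 ≤ γ)
    (hγ₁ : γ < 1) :
    ∃ i, d i ≤ (∑ j ∈ univ.erase i, S i j) ^ γ * (∑ j ∈ univ.erase i, S j i) ^ (1 - γ) := by
  set p := (1 - γ)⁻¹
  have hp : 1 ≤ p := one_le_inv₀ (by linarith) |>.2 (by linarith)
  set v := fun j => u j ^ p
  have hvu : ∀ j, v j ^ (1 - γ) = u j := fun j => by
    rw [← Real.rpow_mul (hu j), inv_mul_cancel₀ (by linarith), Real.rpow_one]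
  set W := fun i => ∑ j ∈ univ.erase i, S i j * v j
  set Q := fun i => ∑ j ∈ univ.erase i, S j i
  have hW : ∀ i, 0 ≤ W i := fun i =>
    sum_nonneg fun j _ => mul_nonneg (hS i j) (Real.rpow_nonneg (hu j) p)
  have holder : ∀ i, d i * u i ≤ (∑ j ∈ univ.erase i, S i j) ^ γ * W i ^ (1 - γ) := fun i => by
    have := Real.inner_le_weight_mul_Lp_of_nonneg (univ.erase i) hp (S i) u (hS i) hu
    rw [inv_inv, sub_sub_cancel] at this
    exact (h i).trans this
  have hsum : ∑ i, Q i * v i = ∑ i, W i := by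
    simp only [Q, W, sum_mul]
    exact sum_sum_erase_comm (fun i j => S i j * v j) |>.symm
  obtain ⟨i, hvi, hWi⟩ : ∃ i, 0 < v i ∧ W i ≤ Q i * v i := by
    by_contra! hlt
    obtain ⟨i₀, hi₀⟩ := Function.ne_iff.1 hu₀
    have hvi₀ : 0 < v i₀ := Real.rpow_pos_of_pos ((hu i₀).lt_of_ne' hi₀) p
    refine (sum_lt_sum (fun i _ => ?_) ⟨i₀, mem_univ _, hlt i₀ hvi₀⟩).ne hsum
    rcases (Real.rpow_nonneg (hu i) p).lt_or_eq with hvi | hvi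
    · exact (hlt i hvi).le
    · rw [show v i = 0 from hvi.symm, mul_zero]
      exact hW i
  have hui : 0 < u i := by rw [← hvu i]; positivity
  refine ⟨i, le_of_mul_le_mul_right ?_ hui⟩
  calc d i * u i ≤ (∑ j ∈ univ.erase i, S i j) ^ γ * W i ^ (1 - γ) := holder i
    _ ≤ (∑ j ∈ univ.erase i, S i j) ^ γ * (Q i * v i) ^ (1 - γ) := by
        gcongr
        · exact Real.rpow_nonneg (sum_nonneg fun j _ => hS i j) γ
        · exact hW i
    _ = _ := by
        rw [Real.mul_rpow (sum_nonneg fun j _ => hS j i) hvi.le, hvu, mul_assoc]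

theorem exists_le_rpow_mul_rpow_of_mul_le (hS : ∀ i j, 0 ≤ S i j) (hu : ∀ i, 0 ≤ u i)
    (hu₀ : u ≠ 0) (h : ∀ i, d i * u i ≤ ∑ j ∈ univ.erase i, S i j * u j) {γ : ℝ} (hγ₀ : 0 ≤ γ)
    (hγ₁ : γ ≤ 1) :
    ∃ i, d i ≤ (∑ j ∈ univ.erase i, S i j) ^ γ * (∑ j ∈ univ.erase i, S j i) ^ (1 - γ) := by
  rcases hγ₁.lt_or_eq with hγ₁ | rfl
  · exact exists_le_rpow_mul_rpow_of_mul_le_of_lt_one hS hu hu₀ h hγ₀ hγ₁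
  · simpa using exists_le_sum_erase_of_mul_le hS hu hu₀ h

end Ostrowski

theorem Finset.prod_le_sum_pow_card_div_card {ι : Type*} {s : Finset ι} (hs : s.Nonempty)
    {f : ι → ℝ} (hf : ∀ i ∈ s, 0 ≤ f i) :
    ∏ i ∈ s, f i ≤ (∑ i ∈ s, f i ^ #s) / #s := by
  have hcard : (#s : ℝ) ≠ 0 := by exact_mod_cast hs.card_pos.ne'
  have := Real.geom_mean_le_arith_mean_weighted s (fun _ => (#s : ℝ)⁻¹) (fun i => f i ^ #s)
    (fun _ _ => by positivity) (by simp [hcard]) (fun i hi => pow_nonneg (hf i hi) _)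
  convert this using 1
  · refine prod_congr rfl fun i hi => ?_
    rw [← Real.rpow_natCast, ← Real.rpow_mul (hf i hi), mul_inv_cancel₀ hcard, Real.rpow_one]
  · rw [← mul_sum, inv_mul_eq_div]

section Tensor

variable {n k : ℕ} (A : Fin n → (Fin k → Fin n) → ℂ)

theorem tS_nonneg (i j : Fin n) : 0 ≤ tS A i j :=
  mul_nonneg (by positivity) (sum_nonneg fun _ _ => sum_nonneg fun _ _ => norm_nonneg _)

theorem sum_tS_mul (i : Fin n) (u : Fin n → ℝ) :
    ∑ j, tS A i j * u j = (1 / k : ℝ) * ∑ α ∈ univ.erase (fun _ => i), ‖A i α‖ * ∑ t, u (α t) := by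
  have fiber (t : Fin k) :
      ∑ j, ∑ α ∈ univ.filter (fun α : Fin k → Fin n => α t = j ∧ α ≠ fun _ => i), ‖A i α‖ * u j =
        ∑ α ∈ univ.erase (fun _ => i), ‖A i α‖ * u (α t) := by
    rw [← sum_fiberwise _ (fun α : Fin k → Fin n => α t)]
    refine sum_congr rfl fun j _ => sum_congr ?_ fun α hα => by rw [(mem_filter.1 hα).2]
    rw [← filter_ne', filter_filter]
    simp only [and_comm]
  simp only [tS, mul_assoc, ← mul_sum, sum_mul]
  congr 1
  rw [sum_comm, sum_congr rfl fun t _ => fiber t, sum_comm]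
  simp only [mul_sum]

theorem norm_sub_diag_mul_le_sum_tS (hk : 1 ≤ k) {lam : ℝ} {x : Fin n → ℝ}
    (hx : ∀ i, (∑ α : Fin k → Fin n, A i α * ∏ t, (x (α t) : ℂ)) = (lam : ℂ) * (x i : ℂ) ^ k)
    (i : Fin n) :
    ‖(lam : ℂ) - A i (fun _ => i)‖ * |x i| ^ k ≤ ∑ j, tS A i j * |x j| ^ k := by
  have hoff : ((lam : ℂ) - A i (fun _ => i)) * (x i : ℂ) ^ k =
      ∑ α ∈ univ.erase (fun _ => i), A i α * ∏ t, (x (α t) : ℂ) := by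
    have := hx i
    rw [← add_sum_erase _ _ (mem_univ (fun _ => i))] at this
    simp only [prod_const, card_univ, Fintype.card_fin] at this
    linear_combination -this
  have amgm (α : Fin k → Fin n) : ∏ t, |x (α t)| ≤ (∑ t, |x (α t)| ^ k) / k := by
    simpa using prod_le_sum_pow_card_div_card (s := univ) ⟨⟨0, hk⟩, mem_univ _⟩
      (fun t _ => abs_nonneg (x (α t)))
  calc ‖(lam : ℂ) - A i (fun _ => i)‖ * |x i| ^ k
      = ‖∑ α ∈ univ.erase (fun _ => i), A i α * ∏ t, (x (α t) : ℂ)‖ := by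
        rw [← hoff, norm_mul, norm_pow, Complex.norm_real, Real.norm_eq_abs]
    _ ≤ ∑ α ∈ univ.erase (fun _ => i), ‖A i α‖ * ∏ t, |x (α t)| :=
        (norm_sum_le _ _).trans_eq (by simp [norm_prod])
    _ ≤ ∑ α ∈ univ.erase (fun _ => i), ‖A i α‖ * ((∑ t, |x (α t)| ^ k) / k) := by
        gcongr with α; exact amgm α
    _ = ∑ j, tS A i j * |x j| ^ k := by
        rw [sum_tS_mul, mul_sum]
        exact sum_congr rfl fun α _ => by ring

end Tensor

theorem stmt13_general {n k : ℕ} (hk : 1 ≤ k) (A : Fin n → (Fin k → Fin n) → ℂ)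
    (γ : ℝ) (hγ : γ ∈ Set.Icc (0:ℝ) 1) (lam : ℝ) (hlam : IsHEig A lam) :
    ∃ i : Fin n,
      ‖(lam : ℂ) - A i (fun _ => i)‖ - tS A i i ≤
        tP A i ^ γ * tQ A i ^ (1 - γ) := by
  obtain ⟨x, hx₀, hx⟩ := hlam
  have hu₀ : (fun j => |x j| ^ k) ≠ 0 := fun h =>
    hx₀ <| funext fun j => abs_eq_zero.1 (eq_zero_of_pow_eq_zero (congrFun h j))
  refine exists_le_rpow_mul_rpow_of_mul_le (tS_nonneg A) (fun j => by positivity) hu₀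
    (fun i => ?_) hγ.1 hγ.2
  have := norm_sub_diag_mul_le_sum_tS A hk hx i
  rw [← add_sum_erase _ _ (mem_univ i)] at this
  linarith [sub_mul ‖(lam : ℂ) - A i (fun _ => i)‖ (tS A i i) (|x i| ^ k)]

theorem stmt13 {n k : ℕ} (hn : 2 ≤ n) (hk : 1 ≤ k) (A : Fin n → (Fin k → Fin n) → ℂ)
    (γ : ℝ) (hγ : γ ∈ Set.Icc (0:ℝ) 1) (lam : ℝ) (hlam : IsHEig A lam) :
    ∃ i : Fin n,
      ‖(lam : ℂ) - A i (fun _ => i)‖ - tS A i i ≤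
        tP A i ^ γ * tQ A i ^ (1 - γ) :=
  stmt13_general hk A γ hγ lam hlam
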